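/- arXiv:1306.1645 — 5 statements merged into one kernel-verified Lean document; each statement's English description precedes it below -/
import Mathlib

section
/- If $0 < \prod_{i=1}^{g+1} V_i < \prod_{i=1}^{g+1} I_i$ with all $I_i, V_i > 0$, then the explicit evolution formula $\bar I_i = V_i + I_i \cdot \frac{1 - \prod_j V_j / \prod_j I_j}{1 + \frac{V_{i-1}}{I_{i-1}} + \frac{V_{i-1}V_{i-2}}{I_{i-1}I_{i-2}} + \cdots + \frac{V_{i-1}\cdots V_{i+1}}{I_{i-1}\cdots I_{i+1}}}$, $\bar V_i = I_{i+1} V_i / \bar I_i$ (indices mod $g+1$) satisfies the periodic discrete Toda lattice equations $\bar I_i + \bar V_{i-1} = I_i + V_i$ and $\bar V_i \bar I_i = I_{i+1} V_i$ for all $i$. -/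
/-!
Write `r j = V j / I j` and `D i = ∑_{k=0}^{g} ∏_{l=1}^{k} r (i - l)` for the denominator. Moving
from `i - 1` to `i` shifts the summation index by one, and the only terms gained or lost are the
empty product `1` and the full cyclic product `∏ r = ∏ V / ∏ I`; hence
`D i = r (i - 1) * D (i - 1) + (1 - ∏ V / ∏ I)`. This recurrence rewrites the explicit formula as
`Ibar i = I i * D (i + 1) / D i`, which is positive because `D > 0`, and both pdTL equations are
then the recurrence once more.
-/

open Finset
open Fin.NatCast

variable {n : ℕ} [NeZero n]

theorem Fin.prod_Icc_one_succ_sub {M : Type*} [CommMonoid M] (r : Fin n → M) (i : Fin n)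
    (k : ℕ) :
    ∏ l ∈ Icc 1 (k + 1), r (i - (l : Fin n))
      = r (i - 1) * ∏ l ∈ Icc 1 k, r (i - 1 - (l : Fin n)) := by
  induction k with
  | zero => simp
  | succ k ih =>
    rw [prod_Icc_succ_top (by omega : 1 ≤ k + 2), ih, prod_Icc_succ_top (by omega : 1 ≤ k + 1),
      mul_assoc]
    congr 3
    push_cast
    open Fin.CommRing in ring

theorem Fin.prod_Icc_one_card_sub {M : Type*} [CommMonoid M] (r : Fin n → M) (c : Fin n) :
    ∏ l ∈ Icc 1 n, r (c - (l : Fin n)) = ∏ j, r j := by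
  have hshift (j : Fin n) : c - ((1 + (j : ℕ) : ℕ) : Fin n) = c - 1 - j := by
    push_cast [Fin.cast_val_eq_self]
    open Fin.CommRing in ring
  rw [← Ico_add_one_right_eq_Icc, prod_Ico_eq_prod_range, Nat.add_sub_cancel,
    ← Fin.prod_univ_eq_prod_range (fun j => r (c - ((1 + j : ℕ) : Fin n)))]
  simp_rw [hshift]
  exact (Equiv.subLeft (c - 1)).prod_comp r

def cyclicBackwardSum {R : Type*} [CommSemiring R] (r : Fin n → R) (i : Fin n) : R :=
  ∑ k ∈ range n, ∏ l ∈ Icc 1 k, r (i - (l : Fin n))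

theorem cyclicBackwardSum_eq {R : Type*} [CommRing R] (r : Fin n → R) (i : Fin n) :
    cyclicBackwardSum r i = r (i - 1) * cyclicBackwardSum r (i - 1) + (1 - ∏ j, r j) := by
  have hext := sum_range_succ' (fun k => ∏ l ∈ Icc 1 k, r (i - (l : Fin n))) n
  rw [sum_range_succ, Fin.prod_Icc_one_card_sub] at hext
  simp only [Fin.prod_Icc_one_succ_sub, ← mul_sum, Icc_eq_empty_of_lt zero_lt_one,
    prod_empty] at hext
  unfold cyclicBackwardSum
  linear_combination hext

theorem cyclicBackwardSum_pos {R : Type*} [CommSemiring R] [PartialOrder R]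
    [IsStrictOrderedRing R] {r : Fin n → R} (hr : ∀ j, 0 < r j) (i : Fin n) :
    0 < cyclicBackwardSum r i :=
  sum_pos (fun _ _ => prod_pos fun _ _ => hr _) (nonempty_range_iff.mpr (NeZero.ne n))

section Toda

variable {K : Type*} [Field K] (I V : Fin n → K)

theorem mul_cyclicBackwardSum_add_one {i : Fin n} (hI : I i ≠ 0) :
    I i * cyclicBackwardSum (fun j => V j / I j) (i + 1)
      = V i * cyclicBackwardSum (fun j => V j / I j) i + (1 - (∏ j, V j) / ∏ j, I j) * I i := by
  rw [cyclicBackwardSum_eq, add_sub_cancel_right, prod_div_distrib]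
  field_simp

theorem add_mul_div_cyclicBackwardSum {i : Fin n} (hI : I i ≠ 0)
    (hD : cyclicBackwardSum (fun j => V j / I j) i ≠ 0) :
    V i + I i * (1 - (∏ j, V j) / ∏ j, I j) / cyclicBackwardSum (fun j => V j / I j) i
      = I i * cyclicBackwardSum (fun j => V j / I j) (i + 1)
          / cyclicBackwardSum (fun j => V j / I j) i := by
  rw [mul_cyclicBackwardSum_add_one I V hI]
  field_simp

end Toda

theorem pdTL_explicit_formula_satisfies_equations_general
    (g : ℕ) (I V : Fin (g + 1) → ℝ)
    (hI : ∀ i, 0 < I i) (hV : ∀ i, 0 < V i)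
    (Ibar Vbar : Fin (g + 1) → ℝ)
    (hIbar : ∀ i : Fin (g + 1), Ibar i =
      V i + I i * (1 - (∏ j, V j) / (∏ j, I j)) /
        (∑ k ∈ Finset.range (g + 1), ∏ l ∈ Finset.Icc 1 k,
          V (i - (l : Fin (g + 1))) / I (i - (l : Fin (g + 1)))))
    (hVbar : ∀ i : Fin (g + 1), Vbar i = I (i + 1) * V i / Ibar i) :
    (∀ i : Fin (g + 1), Ibar i + Vbar (i - 1) = I i + V i) ∧
    (∀ i : Fin (g + 1), Vbar i * Ibar i = I (i + 1) * V i) := by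
  have hD i : 0 < cyclicBackwardSum (fun j => V j / I j) i :=
    cyclicBackwardSum_pos (fun j => div_pos (hV j) (hI j)) i
  have hIbar_eq i : Ibar i = I i * cyclicBackwardSum (fun j => V j / I j) (i + 1)
      / cyclicBackwardSum (fun j => V j / I j) i :=
    (hIbar i).trans (add_mul_div_cyclicBackwardSum I V (hI i).ne' (hD i).ne')
  refine ⟨fun i => ?_, fun i => ?_⟩
  · have hrec := mul_cyclicBackwardSum_add_one I V (hI (i - 1)).ne'
    rw [sub_add_cancel] at hrec
    rw [hIbar i, ← cyclicBackwardSum.eq_1 (fun j => V j / I j), hVbar, hIbar_eq (i - 1),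
      sub_add_cancel]
    field_simp [(hI i).ne', (hI (i - 1)).ne', (hD i).ne', (hD (i - 1)).ne']
    linear_combination (-I i) * hrec
  · have hIbar_pos : 0 < Ibar i := hIbar_eq i ▸ div_pos (mul_pos (hI i) (hD _)) (hD i)
    rw [hVbar, div_mul_cancel₀ _ hIbar_pos.ne']

/-- the explicit evolution formula of the periodic discrete Toda lattice
satisfies the pdTL equations. Indices are taken in `Fin (g+1)` (i.e. modulo `g+1`). -/
theorem pdTL_explicit_formula_satisfies_equations
    (g : ℕ) (hg : 1 ≤ g) (I V : Fin (g + 1) → ℝ)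
    (hI : ∀ i, 0 < I i) (hV : ∀ i, 0 < V i)
    (hprodpos : 0 < ∏ i, V i)
    (hlt : ∏ i, V i < ∏ i, I i)
    (Ibar Vbar : Fin (g + 1) → ℝ)
    (hIbar : ∀ i : Fin (g + 1), Ibar i =
      V i + I i * (1 - (∏ j, V j) / (∏ j, I j)) /
        (∑ k ∈ Finset.range (g + 1), ∏ l ∈ Finset.Icc 1 k,
          V (i - (l : Fin (g + 1))) / I (i - (l : Fin (g + 1)))))
    (hVbar : ∀ i : Fin (g + 1), Vbar i = I (i + 1) * V i / Ibar i) :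
    (∀ i : Fin (g + 1), Ibar i + Vbar (i - 1) = I i + V i) ∧
    (∀ i : Fin (g + 1), Vbar i * Ibar i = I (i + 1) * V i) :=
  pdTL_explicit_formula_satisfies_equations_general g I V hI hV Ibar Vbar hIbar hVbar
end

section
/- Each conserved quantity $c_{g+1-k}$ of the periodic discrete Toda lattice, defined as $c_{g+1-k} = \sum_{\Omega\subseteq\Lambda, |\Omega|=k} \det L_\Omega - I_1 V_1 \sum_{\Upsilon \subseteq \bar{\bar\Lambda}, |\Upsilon|=k-2} \det L_\Upsilon$ for $k=2,\ldots,g+1$ (and $c_g = \sum_{i=1}^{g+1}(I_i+V_i)$ for $k=1$), is a subtraction-free homogeneous polynomial in $I_1,\ldots,I_{g+1},V_1,\ldots,V_{g+1}$ of degree $k$; i.e., it can be written as a sum of monomials with nonnegative integer coefficients, each monomial of total degree $k$. -/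
/-!
The principal minors of the tridiagonal matrix `L` obey the continuant recurrence
`det L_{i,j,…} = (I_{i+1} + V_i) det L_{j,…} - [j = i + 1] I_j V_j det L_{…}`. Expanding every
diagonal entry into one of its two variables, the subtracted term removes exactly the monomials
in which `I_k` (chosen at index `k - 1`) is followed by `V_k` (chosen at index `k`); so each
minor is the sum of the remaining monomials, one variable per index, and is subtraction-free
and homogeneous of degree its size. In `c_{g+1-k}` only the term `I_1 V_1 det L_Υ` is
subtracted. It is cancelled inside `det L_{{1} ∪ Υ ∪ {g+1}}` by the monomials choosing `V_1`
at the first index and `I_{g+2} = I_1` at the last one, which are exactly `I_1 V_1 det L_Υ`.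
-/

open Finset Matrix MvPolynomial

/-- The discrete Toda molecule Lax matrix `L_Λ` (0-based indexing). -/
def LLam (g : ℕ) {R : Type*} [CommRing R] (I V : Fin (g + 1) → R) :
    Matrix (Fin (g + 1)) (Fin (g + 1)) R :=
  Matrix.of fun i j =>
    if (i : ℕ) = (j : ℕ) then I (i + 1) + V i
    else if (i : ℕ) + 1 = (j : ℕ) then 1
    else if (i : ℕ) = (j : ℕ) + 1 then I i * V i
    else 0

/-- The generic Lax matrix over the polynomial ring `ℤ[I_1,…,I_{g+1},V_1,…,V_{g+1}]`,
with `I i = X (inl i)` and `V i = X (inr i)`. -/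
noncomputable def LLamX (g : ℕ) :
    Matrix (Fin (g + 1)) (Fin (g + 1)) (MvPolynomial (Fin (g + 1) ⊕ Fin (g + 1)) ℤ) :=
  LLam g (fun i => X (Sum.inl i)) (fun i => X (Sum.inr i))

/-- The index set `\bar{\bar Λ} = {2,…,g}` (1-based), i.e. `{1,…,g-1}` (0-based). -/
def BBLam (g : ℕ) : Finset (Fin (g + 1)) :=
  (Finset.univ : Finset (Fin (g + 1))).filter (fun i => 1 ≤ (i : ℕ) ∧ (i : ℕ) ≤ g - 1)

/-- The conserved quantity `c_{g+1-k}` of the pdTL as a polynomial, for `k = 1,…,g+1`. -/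
noncomputable def pdTLconserved (g k : ℕ) :
    MvPolynomial (Fin (g + 1) ⊕ Fin (g + 1)) ℤ :=
  if k = 1 then ∑ i : Fin (g + 1), (X (Sum.inl i) + X (Sum.inr i))
  else
    (∑ Ω ∈ (Finset.univ : Finset (Fin (g + 1))).powersetCard k,
      ((LLamX g).submatrix (fun p : Ω => (p : Fin (g + 1)))
        (fun p : Ω => (p : Fin (g + 1)))).det)
    - X (Sum.inl 0) * X (Sum.inr 0) *
      (∑ Υ ∈ (BBLam g).powersetCard (k - 2),
        ((LLamX g).submatrix (fun p : Υ => (p : Fin (g + 1)))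
          (fun p : Υ => (p : Fin (g + 1)))).det)

@[to_additive]
lemma Finset.prod_powersetCard_succ_insert {α β : Type*} [DecidableEq α] [CommMonoid β] {a : α}
    {s : Finset α} (ha : a ∉ s) (n : ℕ) (f : Finset α → β) :
    ∏ t ∈ powersetCard (n + 1) (insert a s), f t =
      (∏ t ∈ powersetCard (n + 1) s, f t) * ∏ t ∈ powersetCard n s, f (insert a t) := by
  rw [powersetCard_succ_insert ha, prod_union, prod_image]
  · exact insert_erase_invOn.2.injOn.mono fun t ht ↦ notMem_mono (mem_powersetCard.1 ht).1 ha
  · aesop (add simp [disjoint_left, mem_powersetCard, insert_subset_iff])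

lemma Finset.sort_insert_of_forall_lt {α : Type*} [LinearOrder α] {a : α} {s : Finset α}
    (h : ∀ b ∈ s, b < a) : (insert a s).sort = s.sort ++ [a] := by
  have hnodup : (s.sort ++ [a]).Nodup :=
    List.nodup_append.2 ⟨sort_nodup _ _, List.nodup_singleton a, by
      simp only [mem_sort, List.mem_singleton]; rintro b hb _ rfl; exact (h b hb).ne⟩
  have hsorted : (s.sort ++ [a]).Pairwise (· ≤ ·) :=
    List.pairwise_append.2 ⟨pairwise_sort _ _, List.pairwise_singleton _ _, by
      simp only [mem_sort, List.mem_singleton]; rintro b hb _ rfl; exact (h b hb).le⟩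
  have hset : (s.sort ++ [a]).toFinset = insert a s := by ext; simp
  rw [← hset]
  exact (List.toFinset_sort _ hnodup).2 hsorted

lemma Fin.add_one_eq_iff_of_lt {n : ℕ} {i j : Fin (n + 1)} (h : i < j) :
    i + 1 = j ↔ (i : ℕ) + 1 = j := by
  rw [Fin.ext_iff, Fin.val_add_one_of_lt (h.trans_le (Fin.le_last j))]

section SubtractionFree

variable {σ : Type*}

def IsSubtractionFreeHomogeneous (φ : MvPolynomial σ ℤ) (n : ℕ) : Prop :=
  ∃ ψ : MvPolynomial σ ℕ, ψ.IsHomogeneous n ∧ map (Nat.castRingHom ℤ) ψ = φ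

namespace IsSubtractionFreeHomogeneous

variable {φ ψ : MvPolynomial σ ℤ} {m n : ℕ}

lemma zero (n : ℕ) : IsSubtractionFreeHomogeneous (0 : MvPolynomial σ ℤ) n :=
  ⟨0, isHomogeneous_zero _ _ _, map_zero _⟩

lemma one : IsSubtractionFreeHomogeneous (1 : MvPolynomial σ ℤ) 0 :=
  ⟨1, isHomogeneous_one _ _, map_one _⟩

lemma X (s : σ) : IsSubtractionFreeHomogeneous (X s : MvPolynomial σ ℤ) 1 :=
  ⟨MvPolynomial.X s, isHomogeneous_X _ _, map_X _ _⟩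

lemma add (hφ : IsSubtractionFreeHomogeneous φ n) (hψ : IsSubtractionFreeHomogeneous ψ n) :
    IsSubtractionFreeHomogeneous (φ + ψ) n := by
  obtain ⟨φ', hφ', rfl⟩ := hφ
  obtain ⟨ψ', hψ', rfl⟩ := hψ
  exact ⟨φ' + ψ', hφ'.add hψ', map_add _ _ _⟩

lemma mul (hφ : IsSubtractionFreeHomogeneous φ m) (hψ : IsSubtractionFreeHomogeneous ψ n) :
    IsSubtractionFreeHomogeneous (φ * ψ) (m + n) := by
  obtain ⟨φ', hφ', rfl⟩ := hφ
  obtain ⟨ψ', hψ', rfl⟩ := hψ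
  exact ⟨φ' * ψ', hφ'.mul hψ', map_mul _ _ _⟩

lemma sum {ι : Type*} {s : Finset ι} {f : ι → MvPolynomial σ ℤ}
    (h : ∀ i ∈ s, IsSubtractionFreeHomogeneous (f i) n) :
    IsSubtractionFreeHomogeneous (∑ i ∈ s, f i) n :=
  Finset.sum_induction f (IsSubtractionFreeHomogeneous · n) (fun _ _ => add) (zero n) h

lemma coeff_nonneg (h : IsSubtractionFreeHomogeneous φ n) (d : σ →₀ ℕ) :
    0 ≤ φ.coeff d := by
  obtain ⟨ψ, -, rfl⟩ := h
  rw [coeff_map]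
  exact Int.natCast_nonneg _

lemma degree_eq_of_mem_support (h : IsSubtractionFreeHomogeneous φ n) {d : σ →₀ ℕ}
    (hd : d ∈ φ.support) : d.degree = n := by
  obtain ⟨ψ, hψ, rfl⟩ := h
  rw [mem_support_iff, coeff_map] at hd
  rw [Finsupp.degree_eq_weight_one]
  exact hψ (by simpa using hd)

end IsSubtractionFreeHomogeneous

end SubtractionFree

namespace Matrix

variable {R : Type*} [CommRing R]

def IsTridiagonal {n : ℕ} (A : Matrix (Fin n) (Fin n) R) : Prop :=
  ∀ i j : Fin n, (i : ℕ) + 1 < j ∨ (j : ℕ) + 1 < i → A i j = 0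

lemma IsTridiagonal.submatrix {N n : ℕ} {A : Matrix (Fin N) (Fin N) R} (hA : A.IsTridiagonal)
    {e : Fin n → Fin N} (he : StrictMono e) : (A.submatrix e e).IsTridiagonal := by
  have gap : ∀ i j : Fin n, (i : ℕ) + 1 < j → (e i : ℕ) + 1 < e j := by
    intro i j hij
    have h₁ : e i < e ⟨i + 1, by omega⟩ := he (Fin.mk_lt_mk.2 (by simp))
    have h₂ : e ⟨i + 1, by omega⟩ < e j := he (Fin.mk_lt_mk.2 hij)
    rw [Fin.lt_def] at h₁ h₂
    omega
  exact fun i j hij => hA _ _ (hij.imp (gap i j) (gap j i))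

lemma IsTridiagonal.det_succ_succ {n : ℕ} {A : Matrix (Fin (n + 2)) (Fin (n + 2)) R}
    (hA : A.IsTridiagonal) :
    A.det = A 0 0 * (A.submatrix Fin.succ Fin.succ).det - A 0 1 * A 1 0 *
      (A.submatrix (fun i : Fin n => i.succ.succ) (fun i : Fin n => i.succ.succ)).det := by
  have hminor : (A.submatrix Fin.succ (Fin.succAbove 1)).det =
      A 1 0 * (A.submatrix (fun i : Fin n => i.succ.succ) (fun i : Fin n => i.succ.succ)).det := by
    rw [det_succ_column_zero, Fin.sum_univ_succ,
      Finset.sum_eq_zero fun i _ => by simp [hA i.succ.succ 0 (Or.inr (by simp))]]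
    simp [submatrix_submatrix, Function.comp_def]
  rw [det_succ_row_zero, Fin.sum_univ_succ, Fin.sum_univ_succ,
    Finset.sum_eq_zero fun j _ => by simp [hA 0 j.succ.succ (Or.inl (by simp))],
    Fin.succ_zero_eq_one, hminor]
  simp only [Fin.succAbove_zero, Fin.val_zero, Fin.val_one, pow_zero, pow_one, one_mul, neg_mul,
    add_zero]
  ring

def principalMinor {ι : Type*} [DecidableEq ι] (A : Matrix ι ι R) (s : Finset ι) : R :=
  (A.submatrix (fun p : s => (p : ι)) (fun p : s => (p : ι))).det

end Matrix

section LaxMatrix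

variable {R : Type*} [CommRing R] {g : ℕ} (I V : Fin (g + 1) → R)

lemma isTridiagonal_LLam : (LLam g I V).IsTridiagonal := by
  intro i j hij
  simp only [LLam, of_apply]
  rw [if_neg (by omega), if_neg (by omega), if_neg (by omega)]

lemma LLam_apply_self (i : Fin (g + 1)) : LLam g I V i i = I (i + 1) + V i := by
  simp [LLam]

lemma LLam_mul_LLam_of_lt {i j : Fin (g + 1)} (h : i < j) :
    LLam g I V i j * LLam g I V j i = if i + 1 = j then I j * V j else 0 := by
  simp only [Fin.add_one_eq_iff_of_lt h]
  split_ifs with hij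
  · simp only [LLam, of_apply]
    rw [if_neg (by omega), if_pos hij, if_neg (by omega), if_neg (by omega), if_pos hij.symm,
      one_mul]
  · rw [Fin.lt_def] at h
    rw [isTridiagonal_LLam I V i j (Or.inl (by omega)), zero_mul]

end LaxMatrix

section SfMinor

variable {R : Type*} {g : ℕ} (I V : Fin (g + 1) → R)

/-- Each diagonal entry `I (j + 1) + V j` of `LLam` is expanded into one of its two variables; the
state `some k` records that the last variable chosen was `I k`, and then `V k` is forbidden. -/
def sfMinor [CommSemiring R] : Option (Fin (g + 1)) → List (Fin (g + 1)) → R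
  | _, [] => 1
  | p, j :: l =>
      (if p = some j then 0 else V j * sfMinor none l) + I (j + 1) * sfMinor (some (j + 1)) l

variable [CommRing R]

lemma sfMinor_cons_cons (i j : Fin (g + 1)) (l : List (Fin (g + 1))) :
    sfMinor I V none (i :: j :: l) = (I (i + 1) + V i) * sfMinor I V none (j :: l)
      - (if i + 1 = j then I j * V j else 0) * sfMinor I V none l := by
  by_cases hij : i + 1 = j
  · subst hij
    simp only [sfMinor, reduceCtorEq, ↓reduceIte, zero_add]
    ring
  · simp only [sfMinor, reduceCtorEq, ↓reduceIte, Option.some.injEq, hij]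
    ring

lemma det_submatrix_LLam : ∀ {n : ℕ} (e : Fin n → Fin (g + 1)), StrictMono e →
    ((LLam g I V).submatrix e e).det = sfMinor I V none (List.ofFn e)
  | 0, e, _ => by simp [sfMinor]
  | 1, e, _ => by simp [sfMinor, LLam_apply_self, add_comm (V _)]
  | n + 2, e, he => by
    rw [((isTridiagonal_LLam I V).submatrix he).det_succ_succ, submatrix_submatrix,
      submatrix_submatrix, det_submatrix_LLam _ (he.comp (Fin.strictMono_succ)),
      det_submatrix_LLam (e ∘ fun i : Fin n => i.succ.succ)
        (he.comp (Fin.strictMono_succ.comp Fin.strictMono_succ))]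
    simp only [submatrix_apply, List.ofFn_succ, Function.comp_def, Fin.succ_zero_eq_one]
    rw [sfMinor_cons_cons, LLam_mul_LLam_of_lt I V (he (by simp)), LLam_apply_self]

lemma principalMinor_LLam (s : Finset (Fin (g + 1))) :
    (LLam g I V).principalMinor s = sfMinor I V none s.sort := by
  rw [principalMinor, ← det_submatrix_equiv_self (s.orderIsoOfFin rfl).toEquiv,
    submatrix_submatrix]
  refine (det_submatrix_LLam I V _ (s.orderEmbOfFin rfl).strictMono).trans (congrArg _ ?_)
  exact List.ext_getElem (by simp) fun i _ _ => by
    rw [List.getElem_ofFn, orderEmbOfFin_apply]; rfl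

end SfMinor

section SfMinorSubtractionFree

variable {σ : Type*} {g : ℕ} {I V : Fin (g + 1) → MvPolynomial σ ℤ}

lemma isSubtractionFreeHomogeneous_sfMinor
    (hI : ∀ j, IsSubtractionFreeHomogeneous (I j) 1)
    (hV : ∀ j, IsSubtractionFreeHomogeneous (V j) 1)
    (l : List (Fin (g + 1))) (p : Option (Fin (g + 1))) :
    IsSubtractionFreeHomogeneous (sfMinor I V p l) l.length := by
  induction l generalizing p with
  | nil => exact .one
  | cons j l ih =>
    rw [sfMinor, List.length_cons, add_comm l.length]
    refine .add ?_ ((hI _).mul (ih _))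
    split_ifs
    exacts [.zero _, (hV j).mul (ih none)]

lemma isSubtractionFreeHomogeneous_sfMinor_append_last_sub
    (hI : ∀ j, IsSubtractionFreeHomogeneous (I j) 1)
    (hV : ∀ j, IsSubtractionFreeHomogeneous (V j) 1)
    (l : List (Fin (g + 1))) (p : Option (Fin (g + 1))) :
    IsSubtractionFreeHomogeneous
      (sfMinor I V p (l ++ [Fin.last g]) - I 0 * sfMinor I V p l) (l.length + 1) := by
  induction l generalizing p with
  | nil =>
    simp only [List.nil_append, sfMinor, Fin.last_add_one, mul_one, add_sub_cancel_right]
    split_ifs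
    exacts [.zero _, hV _]
  | cons j l ih =>
    have hsplit : sfMinor I V p (j :: l ++ [Fin.last g]) - I 0 * sfMinor I V p (j :: l) =
        (if p = some j then 0
          else V j * (sfMinor I V none (l ++ [Fin.last g]) - I 0 * sfMinor I V none l))
        + I (j + 1) * (sfMinor I V (some (j + 1)) (l ++ [Fin.last g])
          - I 0 * sfMinor I V (some (j + 1)) l) := by
      simp only [List.cons_append, sfMinor]
      split_ifs <;> ring
    rw [hsplit, List.length_cons, add_comm (l.length + 1)]
    refine .add ?_ ((hI _).mul (ih _))
    split_ifs
    exacts [.zero _, (hV j).mul (ih none)]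

lemma isSubtractionFreeHomogeneous_sfMinor_cyclic_sub
    (hI : ∀ j, IsSubtractionFreeHomogeneous (I j) 1)
    (hV : ∀ j, IsSubtractionFreeHomogeneous (V j) 1)
    (l : List (Fin (g + 1))) :
    IsSubtractionFreeHomogeneous
      (sfMinor I V none (0 :: l ++ [Fin.last g]) - I 0 * V 0 * sfMinor I V none l)
      (l.length + 2) := by
  have hsplit : sfMinor I V none (0 :: l ++ [Fin.last g]) - I 0 * V 0 * sfMinor I V none l =
      V 0 * (sfMinor I V none (l ++ [Fin.last g]) - I 0 * sfMinor I V none l)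
        + I (0 + 1) * sfMinor I V (some (0 + 1)) (l ++ [Fin.last g]) := by
    rw [List.cons_append, sfMinor, if_neg (Option.some_ne_none _).symm]
    ring
  rw [hsplit, show l.length + 2 = 1 + (l.length + 1) by ring]
  exact ((hV 0).mul (isSubtractionFreeHomogeneous_sfMinor_append_last_sub hI hV l none)).add
    ((hI _).mul (by simpa using isSubtractionFreeHomogeneous_sfMinor hI hV (l ++ [Fin.last g]) _))

end SfMinorSubtractionFree

section Toda

variable {g : ℕ}

lemma lt_last_of_mem_BBLam {i : Fin (g + 1)} (hi : i ∈ BBLam g) : i < Fin.last g := by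
  simp only [BBLam, mem_filter, mem_univ, true_and] at hi
  rw [Fin.lt_def, Fin.val_last]
  omega

lemma zero_notMem_insert_last_BBLam (hg : 1 ≤ g) :
    (0 : Fin (g + 1)) ∉ insert (Fin.last g) (BBLam g) := by
  simp only [BBLam, mem_insert, mem_filter, mem_univ, true_and, Fin.ext_iff, Fin.val_zero,
    Fin.val_last]
  omega

lemma insert_zero_insert_last_BBLam :
    insert 0 (insert (Fin.last g) (BBLam g)) = univ := by
  ext i
  simp only [BBLam, mem_insert, mem_filter, mem_univ, true_and, iff_true, Fin.ext_iff,
    Fin.val_zero, Fin.val_last]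
  omega

lemma isSubtractionFreeHomogeneous_principalMinor_LLamX (s : Finset (Fin (g + 1))) :
    IsSubtractionFreeHomogeneous ((LLamX g).principalMinor s) s.card := by
  rw [LLamX, principalMinor_LLam, ← length_sort (· ≤ ·)]
  exact isSubtractionFreeHomogeneous_sfMinor (fun _ => .X _) (fun _ => .X _) _ _

lemma isSubtractionFreeHomogeneous_principalMinor_LLamX_cyclic_sub (hg : 1 ≤ g)
    {s : Finset (Fin (g + 1))} (hs : s ⊆ BBLam g) :
    IsSubtractionFreeHomogeneous ((LLamX g).principalMinor (insert 0 (insert (Fin.last g) s))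
      - X (Sum.inl 0) * X (Sum.inr 0) * (LLamX g).principalMinor s) (s.card + 2) := by
  have h0 : (0 : Fin (g + 1)) ∉ insert (Fin.last g) s :=
    fun h => zero_notMem_insert_last_BBLam hg (insert_subset_insert _ hs h)
  rw [LLamX, principalMinor_LLam, principalMinor_LLam,
    sort_insert _ (fun _ _ => Fin.zero_le _) h0,
    sort_insert_of_forall_lt fun _ hb => lt_last_of_mem_BBLam (hs hb), ← length_sort (· ≤ ·)]
  exact isSubtractionFreeHomogeneous_sfMinor_cyclic_sub (fun _ => .X _) (fun _ => .X _) _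

lemma pdTLconserved_add_two (hg : 1 ≤ g) (m : ℕ) :
    pdTLconserved g (m + 2) =
      ∑ s ∈ powersetCard (m + 2) (insert (Fin.last g) (BBLam g)), (LLamX g).principalMinor s
      + ∑ s ∈ powersetCard (m + 1) (BBLam g), (LLamX g).principalMinor (insert 0 s)
      + ∑ s ∈ powersetCard m (BBLam g),
          ((LLamX g).principalMinor (insert 0 (insert (Fin.last g) s))
            - X (Sum.inl 0) * X (Sum.inr 0) * (LLamX g).principalMinor s) := by
  rw [pdTLconserved, if_neg (by omega), Nat.add_sub_cancel, ← insert_zero_insert_last_BBLam,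
    sum_powersetCard_succ_insert (zero_notMem_insert_last_BBLam hg),
    sum_powersetCard_succ_insert (fun h => (lt_last_of_mem_BBLam h).ne rfl) m,
    sum_sub_distrib, mul_sum]
  unfold principalMinor
  ring

end Toda

lemma isSubtractionFreeHomogeneous_pdTLconserved {g k : ℕ} (hg : 1 ≤ g) (hk : 1 ≤ k) :
    IsSubtractionFreeHomogeneous (pdTLconserved g k) k := by
  obtain rfl | ⟨m, rfl⟩ : k = 1 ∨ ∃ m, k = m + 2 := by
    rcases Nat.exists_eq_add_of_le' hk with ⟨_ | m, rfl⟩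
    exacts [.inl rfl, .inr ⟨m, rfl⟩]
  · rw [pdTLconserved, if_pos rfl]
    exact .sum fun i _ => (IsSubtractionFreeHomogeneous.X _).add (.X _)
  rw [pdTLconserved_add_two hg]
  refine .add (.add (.sum fun s hs => ?_) (.sum fun s hs => ?_)) (.sum fun s hs => ?_) <;>
    rw [mem_powersetCard] at hs
  · exact hs.2 ▸ isSubtractionFreeHomogeneous_principalMinor_LLamX s
  · have h0 : (0 : Fin (g + 1)) ∉ s :=
      fun h => zero_notMem_insert_last_BBLam hg (mem_insert_of_mem (hs.1 h))
    have := isSubtractionFreeHomogeneous_principalMinor_LLamX (insert 0 s)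
    rwa [card_insert_of_notMem h0, hs.2] at this
  · exact hs.2 ▸ isSubtractionFreeHomogeneous_principalMinor_LLamX_cyclic_sub hg hs.1

theorem pdTLconserved_subtraction_free_homogeneous_general
    (g : ℕ) (hg : 1 ≤ g) (k : ℕ) (hk1 : 1 ≤ k) :
    ∀ d ∈ (pdTLconserved g k).support,
      0 ≤ (pdTLconserved g k).coeff d ∧ (d.sum fun _ n => n) = k := by
  have h := isSubtractionFreeHomogeneous_pdTLconserved hg hk1
  exact fun d hd => ⟨h.coeff_nonneg d, h.degree_eq_of_mem_support hd⟩

/-- each conserved quantity `c_{g+1-k}` is a subtraction-free homogeneous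
polynomial of degree `k`: every monomial in its support has nonnegative coefficient and
total degree exactly `k`. -/
theorem pdTLconserved_subtraction_free_homogeneous
    (g : ℕ) (hg : 1 ≤ g) (k : ℕ) (hk1 : 1 ≤ k) (hk2 : k ≤ g + 1) :
    ∀ d ∈ (pdTLconserved g k).support,
      0 ≤ (pdTLconserved g k).coeff d ∧ (d.sum fun _ n => n) = k :=
  pdTLconserved_subtraction_free_homogeneous_general g hg k hk1
end

section
/- For the periodic discrete Toda lattice conserved quantity with $k = g+1$: $c_0 = \prod_{i=1}^{g+1} I_i + \prod_{j=1}^{g+1} V_j$. -/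
/-!
Write `L_n(I, V)` for `todaMatrix n I V` and `σ` for the shift of indices by one. `L_Λ` is
tridiagonal, so its determinant satisfies the continuant recurrence, which for the Toda entries
collapses to two first-order recurrences:
`det L_{n+1}(I, V) = I_1 ⋯ I_{n+1} + V_0 det L_n(σI, σV)` from the first row, and then, by
induction, `det L_{n+1}(I, V) = I_{n+1} det L_n(I, V) + V_0 ⋯ V_n`. Applying the first to `L_Λ`
and the second to the resulting minor `L_n(σI, σV)` produces the term
`V_0 I_{g+1} det L_{\bar{\bar Λ}}`, which is `I_0 V_0 det L_{\bar{\bar Λ}}` by periodicity;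
the rest is `∏ I + ∏ V`.
-/

open Finset Matrix

open Fin.NatCast in
theorem Fin.prod_range_natCast_add {M : Type*} [CommMonoid M] (m k : ℕ) [NeZero m]
    (f : Fin m → M) : ∏ i ∈ range m, f ((i + k : ℕ) : Fin m) = ∏ i, f i := by
  rw [← Fin.prod_univ_eq_prod_range (fun i => f ((i + k : ℕ) : Fin m))]
  simp only [Nat.cast_add, Fin.cast_val_eq_self]
  exact Equiv.prod_comp (Equiv.addRight (k : Fin m)) f

namespace Matrix

variable {R : Type*} [CommRing R]

def tridiagonal (n : ℕ) (d u l : ℕ → R) : Matrix (Fin n) (Fin n) R :=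
  of fun i j =>
    if (i : ℕ) = j then d i
    else if (i : ℕ) + 1 = j then u i
    else if (i : ℕ) = j + 1 then l i
    else 0

theorem tridiagonal_submatrix {m n : ℕ} (k : ℕ) (r c : Fin n → Fin m)
    (hr : ∀ a, (r a : ℕ) = a + k) (hc : ∀ a, (c a : ℕ) = a + k) (d u l : ℕ → R) :
    (tridiagonal m d u l).submatrix r c =
      tridiagonal n (fun i => d (i + k)) (fun i => u (i + k)) (fun i => l (i + k)) := by
  ext a b
  simp only [tridiagonal, submatrix_apply, of_apply, hr, hc]
  split_ifs <;> first | rfl | omega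

theorem det_tridiagonal_succ_succ (n : ℕ) (d u l : ℕ → R) :
    (tridiagonal (n + 2) d u l).det =
      d 0 * (tridiagonal (n + 1) (fun i => d (i + 1)) (fun i => u (i + 1))
          (fun i => l (i + 1))).det -
        u 0 * l 1 * (tridiagonal n (fun i => d (i + 2)) (fun i => u (i + 2))
          (fun i => l (i + 2))).det := by
  set T := tridiagonal (n + 2) d u l
  have row_zero (j : Fin n) : T 0 j.succ.succ = 0 := by
    simp only [T, tridiagonal, of_apply, Fin.val_succ, Fin.val_zero]
    split_ifs <;> first | rfl | omega | contradiction
  set M := T.submatrix Fin.succ (Fin.succ 0).succAbove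
  have col_zero (i : Fin n) : M i.succ 0 = 0 := by
    simp only [M, T, tridiagonal, submatrix_apply, of_apply, Fin.succ_succAbove_zero,
      Fin.val_succ, Fin.val_zero]
    split_ifs <;> first | rfl | omega | contradiction
  have det_M : M.det = l 1 * (tridiagonal n (fun i => d (i + 2)) (fun i => u (i + 2))
      (fun i => l (i + 2))).det := by
    rw [det_succ_column_zero, Fin.sum_univ_succ,
      Finset.sum_eq_zero fun i _ => by rw [col_zero, mul_zero, zero_mul], submatrix_submatrix,
      tridiagonal_submatrix 2 _ _ (fun _ => rfl) (fun _ => by simp)]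
    simp [M, T, tridiagonal]
  rw [det_succ_row_zero, Fin.sum_univ_succ, Fin.sum_univ_succ,
    Finset.sum_eq_zero fun j _ => by rw [row_zero, mul_zero, zero_mul], Fin.succAbove_zero,
    tridiagonal_submatrix 1 _ _ (fun _ => rfl) (fun _ => rfl), det_M]
  simp only [T, tridiagonal, of_apply, Fin.succ_zero_eq_one, Fin.val_zero, Fin.val_one, pow_zero,
    pow_one, reduceIte, zero_ne_one, zero_add, one_mul, neg_mul, add_zero]
  ring

end Matrix

section Toda

variable {R : Type*} [CommRing R]

def todaMatrix (n : ℕ) (I V : ℕ → R) : Matrix (Fin n) (Fin n) R :=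
  tridiagonal n (fun k => I (k + 1) + V k) 1 (fun k => I k * V k)

theorem todaMatrix_submatrix {m n : ℕ} (k : ℕ) (e : Fin n → Fin m)
    (he : ∀ a, (e a : ℕ) = a + k) (I V : ℕ → R) :
    (todaMatrix m I V).submatrix e e = todaMatrix n (fun i => I (i + k)) (fun i => V (i + k)) := by
  rw [todaMatrix, tridiagonal_submatrix k e e he he, todaMatrix]
  simp only [Pi.one_apply, add_right_comm]
  rfl

theorem det_todaMatrix_succ_succ (n : ℕ) (I V : ℕ → R) :
    (todaMatrix (n + 2) I V).det =
      (I 1 + V 0) * (todaMatrix (n + 1) (fun i => I (i + 1)) (fun i => V (i + 1))).det -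
        I 1 * V 1 * (todaMatrix n (fun i => I (i + 2)) (fun i => V (i + 2))).det := by
  rw [todaMatrix, det_tridiagonal_succ_succ, Pi.one_apply, one_mul]
  rfl

theorem det_todaMatrix_succ (n : ℕ) (I V : ℕ → R) :
    (todaMatrix (n + 1) I V).det =
      ∏ i ∈ range (n + 1), I (i + 1) +
        V 0 * (todaMatrix n (fun i => I (i + 1)) (fun i => V (i + 1))).det := by
  induction n generalizing I V with
  | zero => simp [todaMatrix, tridiagonal]
  | succ n ih =>
    rw [det_todaMatrix_succ_succ, ih, prod_range_succ' _ (n + 1)]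
    ring

theorem det_todaMatrix_succ' (n : ℕ) (I V : ℕ → R) :
    (todaMatrix (n + 1) I V).det =
      I (n + 1) * (todaMatrix n I V).det + ∏ i ∈ range (n + 1), V i := by
  induction n generalizing I V with
  | zero => simp [todaMatrix, tridiagonal, add_comm]
  | succ n ih =>
    rw [det_todaMatrix_succ, ih, det_todaMatrix_succ, prod_range_succ _ (n + 1),
      prod_range_succ' _ (n + 1)]
    ring

end Toda

open Fin.NatCast in
/-- the conserved quantity `c_0 = det L_Λ - I_1 V_1 det L_{\bar{\bar Λ}}`
equals `∏ I_i + ∏ V_j`.  Here `L_{\bar{\bar Λ}}` is the principal submatrix on the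
index set `{2,…,g}` (1-based), i.e. `{1,…,g-1}` (0-based), realized via `Fin (g-1)`. -/
theorem pdTL_c0_eq
    (g : ℕ) (hg : 1 ≤ g) {R : Type*} [CommRing R] (I V : Fin (g + 1) → R) :
    (LLam g I V).det -
      I 0 * V 0 *
        (Matrix.of fun a b : Fin (g - 1) =>
          LLam g I V ((((a : ℕ) + 1 : ℕ)) : Fin (g + 1)) ((((b : ℕ) + 1 : ℕ)) : Fin (g + 1))).det =
      (∏ i, I i) + (∏ i, V i) := by
  obtain ⟨n, rfl⟩ : ∃ n, g = n + 1 := ⟨g - 1, by omega⟩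
  -- the periodic extensions of `I` and `V` to `ℕ`
  set I' : ℕ → R := fun i => I i
  set V' : ℕ → R := fun i => V i
  have hL : LLam (n + 1) I V = todaMatrix (n + 2) I' V' := by
    ext i j
    simp [LLam, todaMatrix, tridiagonal, I', V']
  have hsub : (of fun a b : Fin (n + 1 - 1) =>
      LLam (n + 1) I V (((a : ℕ) + 1 : ℕ) : Fin (n + 2)) (((b : ℕ) + 1 : ℕ) : Fin (n + 2))) =
      todaMatrix n (fun i => I' (i + 1)) (fun i => V' (i + 1)) := by
    rw [hL]
    exact todaMatrix_submatrix 1 _ (fun a => Fin.val_cast_of_lt (by omega)) I' V'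
  have hI : ∏ i ∈ range (n + 2), I' (i + 1) = ∏ i, I i := Fin.prod_range_natCast_add _ 1 I
  have hV : V' 0 * ∏ i ∈ range (n + 1), V' (i + 1) = ∏ i, V i := by
    rw [mul_comm, ← prod_range_succ', ← Fin.prod_range_natCast_add _ 0 V]
    rfl
  rw [hsub, hL, det_todaMatrix_succ, det_todaMatrix_succ', ← hI, ← hV]
  have hwrap : I' (n + 1 + 1) = I 0 := by simp [I']
  have hV0 : V' 0 = V 0 := rfl
  rw [hwrap, hV0]
  ring
end

section
/- For $g=1$, the point $\bar P_1 = (-I_1 - V_1,\ I_1V_2 - I_2V_1)$ lies on the curve $\kappa_2$ given by $h_2(u,v) = I_1I_2 + V_1V_2 + 2I_2V_1 + u^2 + c_1 u + v = 0$ (with $c_1 = I_1+I_2+V_1+V_2$), and on the spectral curve $\gamma: v^2 = (u^2+c_1u+c_0)^2 - 4c_{-1}$. Moreover, if $\bar I_1, \bar I_2, \bar V_1, \bar V_2$ satisfy the pdTL equations $\bar I_i + \bar V_{i-1} = I_i + V_i$, $\bar V_i \bar I_i = I_{i+1}V_i$ (indices mod 2), then $\bar P_1 = (-\bar I_1 -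 \bar V_2,\ \bar I_2 \bar V_2 - \bar I_1 \bar V_1)$. -/
theorem g1_Pbar1_on_kappa2_gamma_and_image_general (I1 I2 V1 V2 : ℝ) :
    (I1 * I2 + V1 * V2 + 2 * I2 * V1 + (-I1 - V1) ^ 2 +
        (I1 + I2 + V1 + V2) * (-I1 - V1) + (I1 * V2 - I2 * V1) = 0) ∧
    ((I1 * V2 - I2 * V1) ^ 2 =
      ((-I1 - V1) ^ 2 + (I1 + I2 + V1 + V2) * (-I1 - V1) + (I1 * I2 + V1 * V2)) ^ 2 -
        4 * (I1 * I2 * V1 * V2)) ∧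
    (∀ Ibar1 Ibar2 Vbar1 Vbar2 : ℝ,
      Ibar1 + Vbar2 = I1 + V1 → Ibar2 + Vbar1 = I2 + V2 →
      Vbar1 * Ibar1 = I2 * V1 → Vbar2 * Ibar2 = I1 * V2 →
      (-I1 - V1, I1 * V2 - I2 * V1) =
        (-Ibar1 - Vbar2, Ibar2 * Vbar2 - Ibar1 * Vbar1)) := by
  refine ⟨by ring, by ring, fun Ibar1 Ibar2 Vbar1 Vbar2 hsum _ hprod1 hprod2 => ?_⟩
  rw [Prod.mk.injEq, ← hprod1, ← hprod2]
  exact ⟨by linarith, by ring⟩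

/-- for `g = 1`, the point `P̄₁ = (-I₁-V₁, I₁V₂ - I₂V₁)` lies on the curve
`κ₂` and on the spectral curve `γ`; moreover, if `Ī, V̄` satisfy the pdTL equations then
`P̄₁ = (-Ī₁-V̄₂, Ī₂V̄₂ - Ī₁V̄₁)`. -/
theorem g1_Pbar1_on_kappa2_gamma_and_image (I1 I2 V1 V2 : ℝ)
    (hI1 : 0 < I1) (hI2 : 0 < I2) (hV1 : 0 < V1) (hV2 : 0 < V2)
    (hlt : V1 * V2 < I1 * I2) :
    (I1 * I2 + V1 * V2 + 2 * I2 * V1 + (-I1 - V1) ^ 2 +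
        (I1 + I2 + V1 + V2) * (-I1 - V1) + (I1 * V2 - I2 * V1) = 0) ∧
    ((I1 * V2 - I2 * V1) ^ 2 =
      ((-I1 - V1) ^ 2 + (I1 + I2 + V1 + V2) * (-I1 - V1) + (I1 * I2 + V1 * V2)) ^ 2 -
        4 * (I1 * I2 * V1 * V2)) ∧
    (∀ Ibar1 Ibar2 Vbar1 Vbar2 : ℝ,
      Ibar1 + Vbar2 = I1 + V1 → Ibar2 + Vbar1 = I2 + V2 →
      Vbar1 * Ibar1 = I2 * V1 → Vbar2 * Ibar2 = I1 * V2 →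
      (-I1 - V1, I1 * V2 - I2 * V1) =
        (-Ibar1 - Vbar2, Ibar2 * Vbar2 - Ibar1 * Vbar1)) :=
  g1_Pbar1_on_kappa2_gamma_and_image_general I1 I2 V1 V2
end

section
/- Let $F(X,Y) = \min\big(2Y,\ Y + \min((g+1)X, C_g+gX, \ldots, C_1+X, C_0),\ C_{-1}\big)$ be the tropical polynomial defining the spectral curve of the pBBS, with the genericity assumptions $C_{-1} > 2C_0$, $C_{g-1} > 2C_g$, and $C_i + C_{i+2} > 2C_{i+1}$ for $i = 0,\ldots,g-2$. Then for each $i = 0, 1,\ldots, g$, the point $V_i = (C_{g-i}-C_{g-i+1},\ C_{-1} - (g-i+1)C_{g-i} + (g-i)C_{g-i+1})$ (with the convention $C_{g+1} = 0$) is a point at which $F$ is not differentiable, i.e., a point of the tropical curve $\tilde\Gamma$. -/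
/-! At `V_i`, with `j = g - i`, the terms `C₋₁`, `Y + C_j + jX` and `Y + C_{j+1} + (j+1)X` of `F`
agree, and by the discrete convexity of `(C_k)` they realise the minimum. So `F` lies below two
affine functions with different gradients that both touch it at `V_i`; where `F` is
differentiable, its derivative must equal the derivative of every such function. -/

open Topology

/-- The tropical polynomial `F` defining the spectral curve of the pBBS, with the
convention `C (g+1) = 0` (so the inner min ranges over `C_i + iX` for `i = 0,…,g+1`). -/
noncomputable def Ftrop (g : ℕ) (Cm1 : ℝ) (C : ℕ → ℝ) : ℝ × ℝ → ℝ :=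
  fun p =>
    min (min (2 * p.2)
      (p.2 + (Finset.range (g + 2)).inf'
        (Finset.nonempty_range_iff.mpr (by omega)) (fun k => C k + k * p.1))) Cm1

theorem HasFDerivAt.eq_of_eventuallyLE_of_eq {E : Type*} [NormedAddCommGroup E]
    [NormedSpace ℝ E] {f g : E → ℝ} {f' g' : E →L[ℝ] ℝ} {a : E}
    (hf : HasFDerivAt f f' a) (hg : HasFDerivAt g g' a) (hle : f ≤ᶠ[𝓝 a] g)
    (heq : f a = g a) : f' = g' := by
  have hmax : IsLocalMax (f - g) a :=
    hle.mono fun x hx => by simp only [Pi.sub_apply, heq, sub_self]; linarith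
  exact sub_eq_zero.1 (hmax.hasFDerivAt_eq_zero (hf.sub hg))

theorem not_differentiableAt_of_eventuallyLE_of_eventuallyLE {E : Type*}
    [NormedAddCommGroup E] [NormedSpace ℝ E] {f g h : E → ℝ} {g' h' : E →L[ℝ] ℝ} {a : E}
    (hg : HasFDerivAt g g' a) (hh : HasFDerivAt h h' a)
    (hfg : f ≤ᶠ[𝓝 a] g) (hfh : f ≤ᶠ[𝓝 a] h) (hga : f a = g a) (hha : f a = h a)
    (hne : g' ≠ h') : ¬ DifferentiableAt ℝ f a := fun hf =>
  hne <| (hf.hasFDerivAt.eq_of_eventuallyLE_of_eq hg hfg hga).symm.trans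
    (hf.hasFDerivAt.eq_of_eventuallyLE_of_eq hh hfh hha)

section ConvexSequence

variable {C : ℕ → ℝ} {n : ℕ}

theorem antitoneOn_sub_succ (hC : ∀ i, i + 2 ≤ n → 2 * C (i + 1) ≤ C i + C (i + 2)) :
    AntitoneOn (fun k => C k - C (k + 1)) (Set.Iio n) :=
  antitoneOn_of_add_one_le Set.ordConnected_Iio fun a _ _ ha => by
    have := hC a (by simp only [Set.mem_Iio] at ha; omega)
    linarith

/-- A convex sequence lies above the line through its `j`-th and `(j+1)`-th terms. -/
theorem add_mul_sub_succ_le (hC : ∀ i, i + 2 ≤ n → 2 * C (i + 1) ≤ C i + C (i + 2))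
    {j k : ℕ} (hj : j < n) (hk : k ≤ n) :
    C j + j * (C j - C (j + 1)) ≤ C k + k * (C j - C (j + 1)) := by
  set x := C j - C (j + 1)
  have hD := antitoneOn_sub_succ hC
  have step : ∀ a, C (a + 1) + ((a + 1 : ℕ) : ℝ) * x - (C a + a * x) = x - (C a - C (a + 1)) := by
    intro a; push_cast; ring
  rcases le_total j k with hjk | hkj
  · have hmono : MonotoneOn (fun k : ℕ => C k + k * x) (Set.Icc j n) :=
      monotoneOn_of_le_add_one Set.ordConnected_Icc fun a _ ha ha1 => by
        have := hD hj (show a < n by simp only [Set.mem_Icc] at ha1; omega) ha.1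
        linarith [step a]
    exact hmono ⟨le_rfl, hj.le⟩ ⟨hjk, hk⟩ hjk
  · have hanti : AntitoneOn (fun k : ℕ => C k + k * x) (Set.Icc 0 j) :=
      antitoneOn_of_add_one_le Set.ordConnected_Icc fun a _ _ ha1 => by
        have := hD (show a < n by simp only [Set.mem_Icc] at ha1; omega) hj
          (show a ≤ j by simp only [Set.mem_Icc] at ha1; omega)
        linarith [step a]
    exact hanti ⟨k.zero_le, hkj⟩ ⟨j.zero_le, le_rfl⟩ hkj

end ConvexSequence

/-- The vertex `V_{g-j}` of the paper, where the terms `C₋₁`, `Y + C_j + jX` and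
`Y + C_{j+1} + (j+1)X` of `F` all agree. -/
def tropicalVertex (Cm1 : ℝ) (C : ℕ → ℝ) (j : ℕ) : ℝ × ℝ :=
  (C j - C (j + 1), Cm1 - (j + 1 : ℕ) * C j + (j : ℕ) * C (j + 1))

section Ftrop

variable {g : ℕ} {Cm1 : ℝ} {C : ℕ → ℝ}

theorem Ftrop_le_const (p : ℝ × ℝ) : Ftrop g Cm1 C p ≤ Cm1 := min_le_right _ _

theorem Ftrop_le_affine {k : ℕ} (hk : k ≤ g + 1) (p : ℝ × ℝ) :
    Ftrop g Cm1 C p ≤ p.2 + C k + k * p.1 := by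
  have hinf := (Finset.range (g + 2)).inf'_le (fun k => C k + k * p.1)
    (Finset.mem_range.2 (Nat.lt_succ_of_le hk))
  have hF : Ftrop g Cm1 C p ≤ p.2 + _ := (min_le_left _ _).trans (min_le_right _ _)
  linarith

theorem tropicalVertex_snd (j : ℕ) :
    (tropicalVertex Cm1 C j).2 = Cm1 - (C j + j * (tropicalVertex Cm1 C j).1) := by
  simp only [tropicalVertex]; push_cast; ring

theorem Ftrop_tropicalVertex (hC : ∀ i, i + 2 ≤ g + 1 → 2 * C (i + 1) ≤ C i + C (i + 2))
    (h0 : 2 * C 0 ≤ Cm1) {j : ℕ} (hj : j ≤ g) :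
    Ftrop g Cm1 C (tropicalVertex Cm1 C j) = Cm1 := by
  set V := tropicalVertex Cm1 C j
  have hmin : ∀ k ≤ g + 1, C j + j * V.1 ≤ C k + k * V.1 := fun k hk =>
    add_mul_sub_succ_le hC (Nat.lt_succ_of_le hj) hk
  have hV := tropicalVertex_snd (Cm1 := Cm1) (C := C) j
  refine (Ftrop_le_const V).antisymm (le_min (le_min ?_ ?_) le_rfl)
  · have := hmin 0 (Nat.zero_le _)
    push_cast at this
    linarith
  · have : Cm1 - V.2 ≤ (Finset.range (g + 2)).inf' (Finset.nonempty_range_iff.mpr (by omega))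
        (fun k => C k + k * V.1) :=
      Finset.le_inf' _ _ fun k hk => by
        linarith [hmin k (Nat.le_of_lt_succ (Finset.mem_range.1 hk))]
    linarith

end Ftrop

/-- under the genericity assumptions, each vertex
`V_i = (C_{g-i} - C_{g-i+1}, C₋₁ - (g-i+1) C_{g-i} + (g-i) C_{g-i+1})` is a point of
non-differentiability of `F`, i.e. a point of the tropical curve. -/
theorem vertices_on_tropical_spectral_curve
    (g : ℕ) (Cm1 : ℝ) (C : ℕ → ℝ)
    (hCtop : C (g + 1) = 0)
    (h1 : Cm1 > 2 * C 0)
    (h2 : C (g - 1) > 2 * C g)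
    (h3 : ∀ i, i + 2 ≤ g → C i + C (i + 2) > 2 * C (i + 1)) :
    ∀ i ≤ g,
      ¬ DifferentiableAt ℝ (Ftrop g Cm1 C)
        (C (g - i) - C (g - i + 1),
          Cm1 - (g - i + 1 : ℕ) * C (g - i) + (g - i : ℕ) * C (g - i + 1)) := by
  intro i hi
  set j := g - i
  change ¬ DifferentiableAt ℝ (Ftrop g Cm1 C) (tropicalVertex Cm1 C j)
  have hconvex : ∀ k, k + 2 ≤ g + 1 → 2 * C (k + 1) ≤ C k + C (k + 2) := by
    intro k hk
    rcases Nat.lt_or_ge (k + 2) (g + 1) with hlt | hge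
    · exact (h3 k (by omega)).le
    · obtain rfl : k = g - 1 := by omega
      rw [show g - 1 + 1 = g by omega, show g - 1 + 2 = g + 1 by omega, hCtop]
      linarith
  have hV : Ftrop g Cm1 C (tropicalVertex Cm1 C j) = Cm1 :=
    Ftrop_tropicalVertex hconvex h1.le (Nat.sub_le g i)
  have hline : HasFDerivAt (fun p : ℝ × ℝ => p.2 + C (j + 1) + ((j + 1 : ℕ) : ℝ) * p.1)
      (ContinuousLinearMap.snd ℝ ℝ ℝ + ((j + 1 : ℕ) : ℝ) • ContinuousLinearMap.fst ℝ ℝ ℝ)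
      (tropicalVertex Cm1 C j) :=
    (hasFDerivAt_snd.add_const _).add (hasFDerivAt_fst.const_mul _)
  refine not_differentiableAt_of_eventuallyLE_of_eventuallyLE (hasFDerivAt_const Cm1 _) hline
    (.of_forall Ftrop_le_const) (.of_forall (Ftrop_le_affine (by omega))) hV ?_ ?_
  · rw [hV]; simp only [tropicalVertex]; push_cast; ring
  · intro h
    simpa using congrArg (fun L => L (0, 1)) h
end
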